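/- arXiv:1801.06060 — 8 statements merged into one kernel-verified Lean document; each statement's English description precedes it below -/
import Mathlib

section
/- Let & be the Łukasiewicz t-norm on [0,1], a & b = max(0, a+b−1), with implication a → b = min(1−a+b, 1). A map φ : [0,1] → [0,1] is a fuzzy lower set of ([0,1], d_L) (i.e., φ(x) & (y → x) ≤ φ(y) for all x,y) if and only if φ is decreasing and 1-Lipschitz. -/
/-- for the Łukasiewicz t-norm `a & b = max 0 (a+b-1)` with implication
`a → b = min (1-a+b) 1`, a map `φ : [0,1] → [0,1]` is a fuzzy lower set of `([0,1], d_L)`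
iff it is decreasing and 1-Lipschitz. -/
theorem lukasiewicz_fuzzy_lower_set_iff (φ : ℝ → ℝ)
    (hφ : ∀ x ∈ Set.Icc (0:ℝ) 1, φ x ∈ Set.Icc (0:ℝ) 1) :
    (∀ x ∈ Set.Icc (0:ℝ) 1, ∀ y ∈ Set.Icc (0:ℝ) 1,
        max 0 (φ x + min (1 - y + x) 1 - 1) ≤ φ y) ↔
    ((∀ x ∈ Set.Icc (0:ℝ) 1, ∀ y ∈ Set.Icc (0:ℝ) 1, x ≤ y → φ y ≤ φ x) ∧
     (∀ x ∈ Set.Icc (0:ℝ) 1, ∀ y ∈ Set.Icc (0:ℝ) 1, |φ x - φ y| ≤ |x - y|)) := by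
  constructor
  · intro h
    have dec : ∀ x ∈ Set.Icc (0:ℝ) 1, ∀ y ∈ Set.Icc (0:ℝ) 1, x ≤ y → φ y ≤ φ x := by
      intro x hx y hy hxy
      have := h y hy x hx
      have hmin : min (1 - x + y) 1 = 1 := min_eq_right (by linarith)
      rw [hmin] at this
      have := le_trans (le_max_right 0 _) this
      linarith
    refine ⟨dec, ?_⟩
    have key : ∀ x ∈ Set.Icc (0:ℝ) 1, ∀ y ∈ Set.Icc (0:ℝ) 1, x ≤ y → φ x - φ y ≤ y - x := by
      intro x hx y hy hxy
      have := h x hx y hy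
      have hmin : min (1 - y + x) 1 = 1 - y + x := min_eq_left (by linarith)
      rw [hmin] at this
      have := le_trans (le_max_right 0 _) this
      linarith
    intro x hx y hy
    rcases le_total x y with hxy | hxy
    · have h1 := dec x hx y hy hxy
      have h2 := key x hx y hy hxy
      rw [abs_of_nonneg (by linarith), abs_of_nonpos (by linarith)]
      linarith
    · have h1 := dec y hy x hx hxy
      have h2 := key y hy x hx hxy
      rw [abs_of_nonpos (by linarith), abs_of_nonneg (by linarith)]
      linarith
  · rintro ⟨dec, lip⟩ x hx y hy
    have hy0 := (hφ y hy).1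
    refine max_le hy0 ?_
    rcases le_total x y with hxy | hxy
    · have hmin : min (1 - y + x) 1 = 1 - y + x := min_eq_left (by linarith)
      rw [hmin]
      have := lip x hx y hy
      have h1 : φ x - φ y ≤ |φ x - φ y| := le_abs_self _
      have h2 : |x - y| = y - x := by rw [abs_of_nonpos (by linarith)]; ring
      linarith
    · have hmin : min (1 - y + x) 1 = 1 := min_eq_right (by linarith)
      rw [hmin]
      have := dec y hy x hx hxy
      linarith
end

section
/- Let & be the product t-norm on [0,1], a & b = ab, with implication a → b = 1 if a ≤ b and b/a if a > b. A map φ : [0,1] → [0,1] is a fuzzy lower set of ([0,1], d_L) if and only if φ is decreasing and y/x ≤ φ(x)/φ(y) whenever x > y, equivalently, y · φ(y) ≤ x · φ(x) for all x > y, i.e., the map x ↦ x · φ(x) is increasing. -/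
/-- for the product t-norm `a & b = a*b` with implication
`a → b = 1` if `a ≤ b`, else `b/a`, a map `φ : [0,1] → [0,1]` is a fuzzy lower set of
`([0,1], d_L)` iff it is decreasing and `x ↦ x * φ x` is increasing on `[0,1]`. -/
theorem product_fuzzy_lower_set_iff (φ : ℝ → ℝ)
    (hφ : ∀ x ∈ Set.Icc (0:ℝ) 1, φ x ∈ Set.Icc (0:ℝ) 1) :
    (∀ x ∈ Set.Icc (0:ℝ) 1, ∀ y ∈ Set.Icc (0:ℝ) 1,
        φ x * (if y ≤ x then 1 else x / y) ≤ φ y) ↔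
    ((∀ x ∈ Set.Icc (0:ℝ) 1, ∀ y ∈ Set.Icc (0:ℝ) 1, x ≤ y → φ y ≤ φ x) ∧
     (∀ x ∈ Set.Icc (0:ℝ) 1, ∀ y ∈ Set.Icc (0:ℝ) 1, y < x → y * φ y ≤ x * φ x)) := by
  constructor
  · intro h
    constructor
    · intro x hx y hy hxy
      have := h y hy x hx
      rw [if_pos hxy, mul_one] at this
      exact this
    · intro x hx y hy hyx
      have := h y hy x hx
      rw [if_neg (not_le.mpr hyx)] at this
      have hx0 : 0 < x := lt_of_le_of_lt hy.1 hyx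
      calc y * φ y = φ y * (y / x) * x := by field_simp
        _ ≤ φ x * x := by
            apply mul_le_mul_of_nonneg_right this hx0.le
        _ = x * φ x := mul_comm _ _
  · rintro ⟨hdec, hinc⟩ x hx y hy
    by_cases hle : y ≤ x
    · rw [if_pos hle, mul_one]
      exact hdec y hy x hx hle
    · rw [if_neg hle]
      push_neg at hle
      have hy0 : 0 < y := lt_of_le_of_lt hx.1 hle
      have := hinc y hy x hx hle
      calc φ x * (x / y) = x * φ x / y := by ring
        _ ≤ y * φ y / y := div_le_div_of_nonneg_right this hy0.le
        _ = φ y := by field_simp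
end

section
/- Let & be the t-norm min on [0,1] with Gödel implication. A map ψ : [0,1] → [0,1] is a fuzzy upper set of ([0,1], d_L) if and only if ψ is increasing and for every x ∈ [0,1], ψ(x) < x implies ψ(x) = ψ(1). -/
/-- for the t-norm `min` with Gödel implication, a map
`ψ : [0,1] → [0,1]` is a fuzzy upper set of `([0,1], d_L)` iff it is increasing and for
all `x`, `ψ x < x` implies `ψ x = ψ 1`. -/
theorem godel_fuzzy_upper_set_iff (ψ : ℝ → ℝ)
    (hψ : ∀ x ∈ Set.Icc (0:ℝ) 1, ψ x ∈ Set.Icc (0:ℝ) 1) :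
    (∀ x ∈ Set.Icc (0:ℝ) 1, ∀ y ∈ Set.Icc (0:ℝ) 1,
        min (if x ≤ y then 1 else y) (ψ x) ≤ ψ y) ↔
    ((∀ x ∈ Set.Icc (0:ℝ) 1, ∀ y ∈ Set.Icc (0:ℝ) 1, x ≤ y → ψ x ≤ ψ y) ∧
     (∀ x ∈ Set.Icc (0:ℝ) 1, ψ x < x → ψ x = ψ 1)) := by
  constructor
  · intro h
    have mono : ∀ x ∈ Set.Icc (0:ℝ) 1, ∀ y ∈ Set.Icc (0:ℝ) 1, x ≤ y → ψ x ≤ ψ y := by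
      intro x hx y hy hxy
      have := h x hx y hy
      rw [if_pos hxy] at this
      have h1 : ψ x ≤ 1 := (hψ x hx).2
      rwa [min_eq_right h1] at this
    refine ⟨mono, ?_⟩
    intro x hx hlt
    rcases eq_or_lt_of_le hx.2 with h1 | h1
    · rw [h1]
    · have key := h 1 (by norm_num) x hx
      rw [if_neg (not_le.mpr h1)] at key
      have hle : ψ x ≤ ψ 1 := mono x hx 1 (by norm_num) hx.2
      rcases le_or_gt (ψ 1) x with hc | hc
      · rw [min_eq_right hc] at key
        exact le_antisymm hle key
      · rw [min_eq_left hc.le] at key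
        exact absurd (key.trans_lt hlt) (lt_irrefl x)
  · rintro ⟨mono, hmax⟩ x hx y hy
    by_cases hxy : x ≤ y
    · rw [if_pos hxy]
      exact min_le_of_right_le (mono x hx y hy hxy)
    · rw [if_neg hxy]
      rcases le_or_gt y (ψ y) with hc | hc
      · exact min_le_of_left_le hc
      · have := hmax y hy hc
        have : ψ x ≤ ψ y := (mono x hx 1 (by norm_num) hx.2).trans this.ge
        exact min_le_of_right_le this
end

section
/- Let & be the Łukasiewicz t-norm on [0,1]. A map ψ : [0,1] → [0,1] is a fuzzy upper set of ([0,1], d_L) if and only if ψ is increasing and 1-Lipschitz. -/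
/-- for the Łukasiewicz t-norm, a map `ψ : [0,1] → [0,1]` is a fuzzy
upper set of `([0,1], d_L)` iff it is increasing and 1-Lipschitz. -/
theorem lukasiewicz_fuzzy_upper_set_iff (ψ : ℝ → ℝ)
    (hψ : ∀ x ∈ Set.Icc (0:ℝ) 1, ψ x ∈ Set.Icc (0:ℝ) 1) :
    (∀ x ∈ Set.Icc (0:ℝ) 1, ∀ y ∈ Set.Icc (0:ℝ) 1,
        max 0 (min (1 - x + y) 1 + ψ x - 1) ≤ ψ y) ↔
    ((∀ x ∈ Set.Icc (0:ℝ) 1, ∀ y ∈ Set.Icc (0:ℝ) 1, x ≤ y → ψ x ≤ ψ y) ∧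
     (∀ x ∈ Set.Icc (0:ℝ) 1, ∀ y ∈ Set.Icc (0:ℝ) 1, |ψ x - ψ y| ≤ |x - y|)) := by
  constructor
  · intro h
    constructor
    · intro x hx y hy hxy
      have := h x hx y hy
      have hmin : min (1 - x + y) 1 = 1 := min_eq_right (by linarith)
      rw [hmin] at this
      have := le_trans (le_max_right 0 _) this
      linarith
    · intro x hx y hy
      rcases le_total x y with hle | hle
      · -- ψ x ≤ ψ y, and ψ y - ψ x ≤ y - x from h y x
        have h1 := h y hy x hx
        have hmin : min (1 - y + x) 1 = 1 - y + x := min_eq_left (by linarith)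
        rw [hmin] at h1
        have h1 := le_trans (le_max_right 0 _) h1
        have h2 := h x hx y hy
        have hmin2 : min (1 - x + y) 1 = 1 := min_eq_right (by linarith)
        rw [hmin2] at h2
        have h2 := le_trans (le_max_right 0 _) h2
        rw [abs_sub_comm (ψ x), abs_sub_comm x, abs_of_nonneg (by linarith), abs_of_nonneg (by linarith)]
        linarith
      · have h1 := h x hx y hy
        have hmin : min (1 - x + y) 1 = 1 - x + y := min_eq_left (by linarith)
        rw [hmin] at h1
        have h1 := le_trans (le_max_right 0 _) h1
        have h2 := h y hy x hx
        have hmin2 : min (1 - y + x) 1 = 1 := min_eq_right (by linarith)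
        rw [hmin2] at h2
        have h2 := le_trans (le_max_right 0 _) h2
        rw [abs_of_nonneg (by linarith), abs_of_nonneg (by linarith)]
        linarith
  · rintro ⟨hmono, hlip⟩ x hx y hy
    have hy0 := (hψ y hy).1
    apply max_le hy0
    rcases le_total x y with hle | hle
    · have hmin : min (1 - x + y) 1 = 1 := min_eq_right (by linarith)
      rw [hmin]
      have := hmono x hx y hy hle
      linarith
    · have hmin : min (1 - x + y) 1 = 1 - x + y := min_eq_left (by linarith)
      rw [hmin]
      have := hlip x hx y hy
      have := abs_le.mp this
      rw [abs_of_nonneg (by linarith)] at this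
      linarith [this.2]
end

section
/- Let & be a continuous t-norm on [0,1] and φ a fuzzy lower set of ([0,1],d_L). If c ∈ [0,1] and φ(c) ≤ c⁻, then φ(c) = φ(1). -/
open Set

/-- The unit interval as a subset of `ℝ`. -/
def I01 : Set ℝ := Set.Icc 0 1

/-- `f` is a continuous t-norm on `[0,1]`: continuous on `[0,1]²`, maps `[0,1]²` into
`[0,1]`, commutative, associative, has unit `1`, and is monotone in each argument. -/
def IsContTNorm (f : ℝ → ℝ → ℝ) : Prop :=
  ContinuousOn (fun p : ℝ × ℝ => f p.1 p.2) (I01 ×ˢ I01) ∧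
  (∀ x ∈ I01, ∀ y ∈ I01, f x y ∈ I01) ∧
  (∀ x y : ℝ, f x y = f y x) ∧
  (∀ x y z : ℝ, f (f x y) z = f x (f y z)) ∧
  (∀ x ∈ I01, f x 1 = x) ∧
  (∀ x ∈ I01, ∀ y ∈ I01, ∀ z ∈ I01, x ≤ y → f x z ≤ f y z)

/-- The implication (residuation) of a left/continuous t-norm:
`a → b = sup {q ∈ [0,1] | f a q ≤ b}`. -/
noncomputable def timp (f : ℝ → ℝ → ℝ) (a b : ℝ) : ℝ :=
  sSup {q : ℝ | q ∈ I01 ∧ f a q ≤ b}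

/-- `c⁺ = inf {x ∈ [0,1] | c ≤ x, x & x = x}`. -/
noncomputable def cplus (f : ℝ → ℝ → ℝ) (c : ℝ) : ℝ :=
  sInf {x : ℝ | x ∈ I01 ∧ c ≤ x ∧ f x x = x}

/-- `c⁻ = sup {x ∈ [0,1] | x ≤ c, x & x = x}`. -/
noncomputable def cminus (f : ℝ → ℝ → ℝ) (c : ℝ) : ℝ :=
  sSup {x : ℝ | x ∈ I01 ∧ x ≤ c ∧ f x x = x}

/-- A fuzzy lower set of `([0,1], d_L)`: `φ` maps `[0,1]` to `[0,1]` and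
`φ(x) & d_L(y,x) ≤ φ(y)` where `d_L(y,x) = y → x`. -/
def IsFuzzyLowerSet (f : ℝ → ℝ → ℝ) (φ : ℝ → ℝ) : Prop :=
  (∀ x ∈ I01, φ x ∈ I01) ∧ ∀ x ∈ I01, ∀ y ∈ I01, f (φ x) (timp f y x) ≤ φ y

/-- A fuzzy upper set of `([0,1], d_L)`: `ψ` maps `[0,1]` to `[0,1]` and
`d_L(x,y) & ψ(x) ≤ ψ(y)`. -/
def IsFuzzyUpperSet (f : ℝ → ℝ → ℝ) (ψ : ℝ → ℝ) : Prop :=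
  (∀ x ∈ I01, ψ x ∈ I01) ∧ ∀ x ∈ I01, ∀ y ∈ I01, f (timp f x y) (ψ x) ≤ ψ y

lemma one_mem_I01 : (1:ℝ) ∈ I01 := by constructor <;> norm_num

lemma zero_mem_I01 : (0:ℝ) ∈ I01 := by constructor <;> norm_num

-- f a 0 = 0 for a ∈ I01
lemma tnorm_zero (f : ℝ → ℝ → ℝ) (hf : IsContTNorm f) {a : ℝ} (ha : a ∈ I01) :
    f a 0 = 0 := by
  obtain ⟨_, hmap, hcomm, _, hunit, hmono⟩ := hf
  have h1 : f a 0 ≤ f 1 0 := hmono a ha 1 one_mem_I01 0 zero_mem_I01 ha.2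
  have h2 : f 1 0 = 0 := by rw [hcomm]; exact hunit 0 zero_mem_I01
  have h3 : (0:ℝ) ≤ f a 0 := (hmap a ha 0 zero_mem_I01).1
  linarith
-- monotone in second argument
lemma tnorm_mono_right (f : ℝ → ℝ → ℝ) (hf : IsContTNorm f) {a x y : ℝ}
    (ha : a ∈ I01) (hx : x ∈ I01) (hy : y ∈ I01) (hxy : x ≤ y) :
    f a x ≤ f a y := by
  obtain ⟨_, _, hcomm, _, _, hmono⟩ := hf
  rw [hcomm a x, hcomm a y]
  exact hmono x hx y hy a ha hxy

lemma timp_one (f : ℝ → ℝ → ℝ) (hf : IsContTNorm f) {c : ℝ} (hc : c ∈ I01) :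
    timp f c 1 = 1 := by
  have hs : {q : ℝ | q ∈ I01 ∧ f c q ≤ 1} = I01 := by
    ext q
    simp only [mem_setOf_eq, and_iff_left_iff_imp]
    exact fun hq => (hf.2.1 c hc q hq).2
  rw [timp, hs]
  show sSup (Icc (0:ℝ) 1) = 1
  rw [csSup_Icc (by norm_num)]

lemma timp_of_one (f : ℝ → ℝ → ℝ) (hf : IsContTNorm f) {c : ℝ} (hc : c ∈ I01) :
    timp f 1 c = c := by
  have hs : {q : ℝ | q ∈ I01 ∧ f 1 q ≤ c} = Icc 0 c := by
    ext q
    simp only [mem_setOf_eq, mem_Icc]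
    constructor
    · rintro ⟨hq, hle⟩
      rw [hf.2.2.1 1 q, hf.2.2.2.2.1 q hq] at hle
      exact ⟨hq.1, hle⟩
    · rintro ⟨h0, hle⟩
      have hq : q ∈ I01 := ⟨h0, le_trans hle hc.2⟩
      refine ⟨hq, ?_⟩
      rw [hf.2.2.1 1 q, hf.2.2.2.2.1 q hq]
      exact hle
  rw [timp, hs, csSup_Icc hc.1]

-- cminus is idempotent, ≤ c, in I01
lemma cminus_mem (f : ℝ → ℝ → ℝ) (hf : IsContTNorm f) {c : ℝ} (hc : c ∈ I01) :
    cminus f c ∈ {x : ℝ | x ∈ I01 ∧ x ≤ c ∧ f x x = x} := by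
  set S := {x : ℝ | x ∈ I01 ∧ x ≤ c ∧ f x x = x} with hS
  have hne : S.Nonempty := ⟨0, zero_mem_I01, hc.1, tnorm_zero f hf zero_mem_I01⟩
  have hbdd : BddAbove S := ⟨c, fun x hx => hx.2.1⟩
  have hSeq : S = Icc 0 c ∩ (fun x => f x x - x) ⁻¹' {0} := by
    ext x
    simp only [hS, mem_setOf_eq, mem_inter_iff, mem_Icc, mem_preimage, mem_singleton_iff]
    constructor
    · rintro ⟨hx, hle, hid⟩; exact ⟨⟨hx.1, hle⟩, by linarith⟩
    · rintro ⟨⟨h0, hle⟩, hz⟩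
      exact ⟨⟨h0, le_trans hle hc.2⟩, hle, by linarith⟩
  have hcont : ContinuousOn (fun x : ℝ => f x x - x) (Icc 0 c) := by
    have hsub : Icc (0:ℝ) c ⊆ I01 := Icc_subset_Icc le_rfl hc.2
    have h1 : ContinuousOn (fun x : ℝ => f x x) (Icc 0 c) := by
      have : ContinuousOn (fun x : ℝ => (x, x)) (Icc 0 c) :=
        (continuous_id.prodMk continuous_id).continuousOn
      exact hf.1.comp this (fun x hx => ⟨hsub hx, hsub hx⟩)
    exact h1.sub continuousOn_id
  have hclosed : IsClosed S := by
    rw [hSeq]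
    exact hcont.preimage_isClosed_of_isClosed isClosed_Icc isClosed_singleton
  exact hclosed.csSup_mem hne hbdd

-- if e idempotent in I01 and a ∈ [0,e] then f a e = a
lemma tnorm_idem_absorb (f : ℝ → ℝ → ℝ) (hf : IsContTNorm f) {a e : ℝ}
    (he : e ∈ I01) (hid : f e e = e) (ha0 : 0 ≤ a) (hae : a ≤ e) :
    f a e = a := by
  obtain ⟨hcontf, hmap, hcomm, hassoc, hunit, hmono⟩ := hf
  have heI : Icc (0:ℝ) e ⊆ I01 := Icc_subset_Icc le_rfl he.2
  have hg : ContinuousOn (fun t : ℝ => f e t) (Icc 0 e) := by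
    have : ContinuousOn (fun t : ℝ => ((e : ℝ), t)) (Icc 0 e) :=
      (continuous_const.prodMk continuous_id).continuousOn
    exact hcontf.comp this (fun t ht => ⟨he, heI ht⟩)
  have h0 : f e 0 = 0 := tnorm_zero f ⟨hcontf, hmap, hcomm, hassoc, hunit, hmono⟩ he
  have hiv := intermediate_value_Icc he.1 hg
  rw [h0, hid] at hiv
  obtain ⟨t, _, hft⟩ := hiv ⟨ha0, hae⟩
  simp only [] at hft
  calc f a e = f (f e t) e := by rw [show f e t = a from hft]
    _ = f e (f t e) := hassoc e t e
    _ = f e (f e t) := by rw [hcomm t e]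
    _ = f (f e e) t := (hassoc e e t).symm
    _ = f e t := by rw [hid]
    _ = a := hft


/-- for a fuzzy lower set `φ` of `([0,1],d_L)`, if `φ c ≤ c⁻`
then `φ c = φ 1`. -/
theorem fuzzy_lower_set_below_cminus (f : ℝ → ℝ → ℝ) (hf : IsContTNorm f)
    (φ : ℝ → ℝ) (hφ : IsFuzzyLowerSet f φ)
    (c : ℝ) (hc : c ∈ I01) (h : φ c ≤ cminus f c) :
    φ c = φ 1 := by
  obtain ⟨hmapφ, hlow⟩ := hφ
  have hφc : φ c ∈ I01 := hmapφ c hc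
  have hφ1 : φ 1 ∈ I01 := hmapφ 1 one_mem_I01
  -- φ 1 ≤ φ c
  have h1 : φ 1 ≤ φ c := by
    have := hlow 1 one_mem_I01 c hc
    rwa [timp_one f hf hc, hf.2.2.2.2.1 (φ 1) hφ1] at this
  -- φ c ≤ φ 1
  have hcm := cminus_mem f hf hc
  obtain ⟨hcmI, hcmle, hcmid⟩ := hcm
  have h2 : φ c ≤ φ 1 := by
    have hkey := hlow c hc 1 one_mem_I01
    rw [timp_of_one f hf hc] at hkey
    -- f (φ c) c = φ c
    have habs : f (φ c) (cminus f c) = φ c :=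
      tnorm_idem_absorb f hf hcmI hcmid hφc.1 h
    have hle1 : φ c ≤ f (φ c) c := by
      calc φ c = f (φ c) (cminus f c) := habs.symm
        _ ≤ f (φ c) c := tnorm_mono_right f hf hφc hcmI hc hcmle
    linarith
  linarith
end

section
/- Let & be a continuous t-norm on [0,1]. A map φ : [0,1] → [0,1] is a fuzzy lower set of ([0,1],d_L) if and only if: (L1) φ is decreasing; (L2) φ(c) ≤ c⁻ implies φ(c) = φ(1); (L3) if c is not idempotent and φ(c⁻) ≥ c⁻, then φ(x) ≥ c⁻ for all x ∈ [c⁻,c⁺] and x ↦ min(c⁺, φ(x)) is a fuzzy lower set of ([c⁻,c⁺], d_L^c) valued in the quantale ([c⁻,c⁺], &, c⁺), where d_L^c(x,y) = min(c⁺, x → y); (L4) if c is idempotent and φ(c) ≥ c then φ(1) ≥ c. -/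
open Set

/-- A fuzzy lower set of `([c⁻,c⁺], d_L^c)` valued in the quantale `([c⁻,c⁺], &, c⁺)`,
where `d_L^c(y,x) = min (c⁺) (y → x)`. -/
def IsFuzzyLowerSetOn (f : ℝ → ℝ → ℝ) (c : ℝ) (σ : ℝ → ℝ) : Prop :=
  (∀ x ∈ Set.Icc (cminus f c) (cplus f c), σ x ∈ Set.Icc (cminus f c) (cplus f c)) ∧
  ∀ x ∈ Set.Icc (cminus f c) (cplus f c), ∀ y ∈ Set.Icc (cminus f c) (cplus f c),
    f (σ x) (min (cplus f c) (timp f y x)) ≤ σ y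

namespace TN

variable {f : ℝ → ℝ → ℝ}

lemma one_mem : (1:ℝ) ∈ I01 := by constructor <;> norm_num

lemma zero_mem : (0:ℝ) ∈ I01 := by constructor <;> norm_num

lemma tn_mono (hf : IsContTNorm f) {a b a' b' : ℝ} (ha : a ∈ I01) (ha' : a' ∈ I01)
    (hb : b ∈ I01) (hb' : b' ∈ I01) (h1 : a ≤ a') (h2 : b ≤ b') : f a b ≤ f a' b' := by
  obtain ⟨-, -, hcomm, -, -, hmono⟩ := hf
  calc f a b ≤ f a' b := hmono a ha a' ha' b hb h1
    _ = f b a' := hcomm _ _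
    _ ≤ f b' a' := hmono b hb b' hb' a' ha' h2
    _ = f a' b' := hcomm _ _

lemma tn_le_left (hf : IsContTNorm f) {x y : ℝ} (hx : x ∈ I01) (hy : y ∈ I01) :
    f x y ≤ x := by
  have := tn_mono hf hx hx hy one_mem le_rfl hy.2
  rwa [hf.2.2.2.2.1 x hx] at this

lemma tn_le_right (hf : IsContTNorm f) {x y : ℝ} (hx : x ∈ I01) (hy : y ∈ I01) :
    f x y ≤ y := by rw [hf.2.2.1]; exact tn_le_left hf hy hx

lemma tn_zero (hf : IsContTNorm f) {x : ℝ} (hx : x ∈ I01) : f x 0 = 0 :=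
  le_antisymm (tn_le_right hf hx zero_mem) (hf.2.1 x hx 0 zero_mem).1

lemma contOn_right (hf : IsContTNorm f) {a : ℝ} (ha : a ∈ I01) :
    ContinuousOn (fun q : ℝ => f a q) I01 := by
  have : ContinuousOn ((fun p : ℝ × ℝ => f p.1 p.2) ∘ (fun q : ℝ => ((a, q) : ℝ × ℝ))) I01 :=
    hf.1.comp (Continuous.continuousOn (by continuity))
      (fun q hq => Set.mem_prod.2 ⟨ha, hq⟩)
  exact this

lemma timpSet_closed (hf : IsContTNorm f) {a b : ℝ} (ha : a ∈ I01) :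
    IsClosed {q : ℝ | q ∈ I01 ∧ f a q ≤ b} := by
  have h1 : {q : ℝ | q ∈ I01 ∧ f a q ≤ b} = I01 ∩ (fun q : ℝ => f a q) ⁻¹' (Set.Iic b) := rfl
  rw [h1]
  exact (contOn_right hf ha).preimage_isClosed_of_isClosed isClosed_Icc isClosed_Iic

lemma timpSet_nonempty (hf : IsContTNorm f) {a b : ℝ} (ha : a ∈ I01) (hb0 : 0 ≤ b) :
    Set.Nonempty {q : ℝ | q ∈ I01 ∧ f a q ≤ b} :=
  ⟨0, zero_mem, by rw [tn_zero hf ha]; exact hb0⟩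

lemma timpSet_bdd : BddAbove {q : ℝ | q ∈ I01 ∧ f a q ≤ b} :=
  ⟨1, fun q hq => hq.1.2⟩

lemma timp_spec (hf : IsContTNorm f) {a b : ℝ} (ha : a ∈ I01) (hb : b ∈ I01) :
    timp f a b ∈ I01 ∧ f a (timp f a b) ≤ b :=
  (timpSet_closed hf ha).csSup_mem (timpSet_nonempty hf ha hb.1) timpSet_bdd

lemma timp_mem (hf : IsContTNorm f) {a b : ℝ} (ha : a ∈ I01) (hb : b ∈ I01) :
    timp f a b ∈ I01 := (timp_spec hf ha hb).1

lemma le_timp (hf : IsContTNorm f) {a b q : ℝ} (hq : q ∈ I01) (h : f a q ≤ b) :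
    q ≤ timp f a b := le_csSup timpSet_bdd ⟨hq, h⟩

lemma timp_eq_one (hf : IsContTNorm f) {a b : ℝ} (ha : a ∈ I01) (hb : b ∈ I01)
    (hab : a ≤ b) : timp f a b = 1 :=
  le_antisymm ((timp_mem hf ha hb).2)
    (le_timp hf one_mem (by rw [hf.2.2.2.2.1 a ha]; exact hab))

lemma timp_one_left (hf : IsContTNorm f) {c : ℝ} (hc : c ∈ I01) : timp f 1 c = c := by
  refine le_antisymm (csSup_le (timpSet_nonempty hf one_mem hc.1) ?_)
    (le_timp hf hc (by rw [hf.2.2.1, hf.2.2.2.2.1 c hc]))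
  intro q hq
  have : f 1 q = q := by rw [hf.2.2.1]; exact hf.2.2.2.2.1 q hq.1
  rw [← this]; exact hq.2

lemma idem_mul_left (hf : IsContTNorm f) {e p : ℝ} (he : e ∈ I01) (hee : f e e = e)
    (hp : p ∈ I01) (hpe : p ≤ e) : f e p = p := by
  have hcont : ContinuousOn (fun q : ℝ => f e q) (Set.Icc 0 1) := contOn_right hf he
  have h0 : f e 0 = 0 := tn_zero hf he
  have h1 : f e 1 = e := hf.2.2.2.2.1 e he
  have hp' : p ∈ Set.Icc (f e 0) (f e 1) := by rw [h0, h1]; exact ⟨hp.1, hpe⟩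
  obtain ⟨q, hq, hfq⟩ := intermediate_value_Icc (by norm_num : (0:ℝ) ≤ 1) hcont hp'
  have hfq : f e q = p := hfq
  calc f e p = f e (f e q) := by rw [hfq]
    _ = f (f e e) q := (hf.2.2.2.1 e e q).symm
    _ = f e q := by rw [hee]
    _ = p := hfq

lemma idem_mul_min (hf : IsContTNorm f) {e z : ℝ} (he : e ∈ I01) (hee : f e e = e)
    (hz : z ∈ I01) : f e z = min e z := by
  rcases le_total z e with h | h
  · rw [min_eq_right h]; exact idem_mul_left hf he hee hz h
  · rw [min_eq_left h]
    refine le_antisymm (tn_le_left hf he hz) ?_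
    calc e = f e e := hee.symm
      _ ≤ f e z := tn_mono hf he he he hz le_rfl h

lemma idemSet_closed (hf : IsContTNorm f) :
    IsClosed {x : ℝ | x ∈ I01 ∧ f x x = x} := by
  have hcont : ContinuousOn (fun x : ℝ => f x x - x) I01 := by
    have h1 : ContinuousOn ((fun p : ℝ × ℝ => f p.1 p.2) ∘ (fun x : ℝ => ((x, x) : ℝ × ℝ))) I01 :=
      hf.1.comp (Continuous.continuousOn (by continuity)) (fun x hx => Set.mem_prod.2 ⟨hx, hx⟩)
    exact h1.sub continuousOn_id
  have h2 : {x : ℝ | x ∈ I01 ∧ f x x = x} = I01 ∩ (fun x : ℝ => f x x - x) ⁻¹' {0} := by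
    ext x; simp [sub_eq_zero]
  rw [h2]
  exact hcont.preimage_isClosed_of_isClosed isClosed_Icc isClosed_singleton

lemma cminus_spec (hf : IsContTNorm f) {c : ℝ} (hc : c ∈ I01) :
    cminus f c ∈ I01 ∧ cminus f c ≤ c ∧ f (cminus f c) (cminus f c) = cminus f c := by
  have hset : {x : ℝ | x ∈ I01 ∧ x ≤ c ∧ f x x = x}
      = {x : ℝ | x ∈ I01 ∧ f x x = x} ∩ Set.Iic c := by ext x; simp; tauto
  have hclosed : IsClosed {x : ℝ | x ∈ I01 ∧ x ≤ c ∧ f x x = x} := by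
    rw [hset]; exact (idemSet_closed hf).inter isClosed_Iic
  have hne : Set.Nonempty {x : ℝ | x ∈ I01 ∧ x ≤ c ∧ f x x = x} :=
    ⟨0, zero_mem, hc.1, tn_zero hf zero_mem⟩
  have hbdd : BddAbove {x : ℝ | x ∈ I01 ∧ x ≤ c ∧ f x x = x} := ⟨1, fun x hx => hx.1.2⟩
  exact hclosed.csSup_mem hne hbdd

lemma cplus_spec (hf : IsContTNorm f) {c : ℝ} (hc : c ∈ I01) :
    cplus f c ∈ I01 ∧ c ≤ cplus f c ∧ f (cplus f c) (cplus f c) = cplus f c := by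
  have hset : {x : ℝ | x ∈ I01 ∧ c ≤ x ∧ f x x = x}
      = {x : ℝ | x ∈ I01 ∧ f x x = x} ∩ Set.Ici c := by ext x; simp; tauto
  have hclosed : IsClosed {x : ℝ | x ∈ I01 ∧ c ≤ x ∧ f x x = x} := by
    rw [hset]; exact (idemSet_closed hf).inter isClosed_Ici
  have hne : Set.Nonempty {x : ℝ | x ∈ I01 ∧ c ≤ x ∧ f x x = x} :=
    ⟨1, one_mem, hc.2, hf.2.2.2.2.1 1 one_mem⟩
  have hbdd : BddBelow {x : ℝ | x ∈ I01 ∧ c ≤ x ∧ f x x = x} := ⟨0, fun x hx => hx.1.1⟩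
  exact hclosed.csInf_mem hne hbdd

lemma cminus_idem (hf : IsContTNorm f) {e : ℝ} (he : e ∈ I01) (hee : f e e = e) :
    cminus f e = e :=
  le_antisymm (cminus_spec hf he).2.1 (le_csSup ⟨1, fun x hx => hx.1.2⟩ ⟨he, le_rfl, hee⟩)

lemma cplus_idem (hf : IsContTNorm f) {e : ℝ} (he : e ∈ I01) (hee : f e e = e) :
    cplus f e = e :=
  le_antisymm (csInf_le ⟨0, fun x hx => hx.1.1⟩ ⟨he, le_rfl, hee⟩) (cplus_spec hf he).2.1

/-- If `x < e ≤ y` with `e` idempotent then `timp f y x = x`. -/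
lemma timp_eq_of_idem (hf : IsContTNorm f) {x y e : ℝ} (hx : x ∈ I01) (hy : y ∈ I01)
    (he : e ∈ I01) (hee : f e e = e) (hxe : x < e) (hey : e ≤ y) : timp f y x = x := by
  refine le_antisymm (csSup_le (timpSet_nonempty hf hy hx.1) ?_)
    (le_timp hf hx (tn_le_right hf hy hx))
  rintro q ⟨hq, hfq⟩
  rcases le_total e q with h | h
  · exfalso
    have h1 : f y e ≤ f y q := tn_mono hf hy hy he hq le_rfl h
    have h2 : f y e = e := by rw [hf.2.2.1, idem_mul_min hf he hee hy, min_eq_left hey]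
    rw [h2] at h1
    exact absurd (le_trans h1 hfq) (not_le.2 hxe)
  · have h1 : f e q ≤ f y q := tn_mono hf he hy hq hq hey le_rfl
    have h2 : f e q = q := idem_mul_left hf he hee hq h
    rw [h2] at h1
    exact le_trans h1 hfq

/-- If `x < y ≤ M` with `M` idempotent then `timp f y x ≤ M`. -/
lemma timp_le_of_idem (hf : IsContTNorm f) {x y M : ℝ} (hx : x ∈ I01) (hy : y ∈ I01)
    (hM : M ∈ I01) (hMM : f M M = M) (hxy : x < y) (hyM : y ≤ M) : timp f y x ≤ M := by
  refine csSup_le (timpSet_nonempty hf hy hx.1) ?_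
  rintro q ⟨hq, hfq⟩
  by_contra hcon
  push_neg at hcon
  have h1 : f y M ≤ f y q := tn_mono hf hy hy hM hq le_rfl hcon.le
  have h2 : f y M = y := by rw [hf.2.2.1, idem_mul_min hf hM hMM hy, min_eq_right hyM]
  rw [h2] at h1
  exact absurd (le_trans h1 hfq) (not_le.2 hxy)

end TN

open TN

/-- characterization of fuzzy lower sets of `([0,1], d_L)` for a general
continuous t-norm, via conditions (L1)-(L4). -/
theorem fuzzy_lower_set_characterization (f : ℝ → ℝ → ℝ) (hf : IsContTNorm f)
    (φ : ℝ → ℝ) (hφ : ∀ x ∈ I01, φ x ∈ I01) :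
    IsFuzzyLowerSet f φ ↔
    ((∀ a ∈ I01, ∀ b ∈ I01, a ≤ b → φ b ≤ φ a) ∧
     (∀ c ∈ I01, φ c ≤ cminus f c → φ c = φ 1) ∧
     (∀ c ∈ I01, f c c ≠ c → cminus f c ≤ φ (cminus f c) →
       (∀ x ∈ Set.Icc (cminus f c) (cplus f c), cminus f c ≤ φ x) ∧
       IsFuzzyLowerSetOn f c (fun x => min (cplus f c) (φ x))) ∧
     (∀ c ∈ I01, f c c = c → c ≤ φ c → c ≤ φ 1)) := by
  have hunit := hf.2.2.2.2.1
  constructor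
  · rintro ⟨-, hineq⟩
    -- L1
    have hL1 : ∀ a ∈ I01, ∀ b ∈ I01, a ≤ b → φ b ≤ φ a := by
      intro a ha b hb hab
      have h := hineq b hb a ha
      rwa [timp_eq_one hf ha hb hab, hunit (φ b) (hφ b hb)] at h
    refine ⟨hL1, ?_, ?_, ?_⟩
    · -- L2
      intro c hc h
      obtain ⟨hmI, hmc, hmm⟩ := cminus_spec hf hc
      have h2 := hineq c hc 1 one_mem
      rw [timp_one_left hf hc] at h2
      have h3 : f (φ c) c = φ c := by
        refine le_antisymm (tn_le_left hf (hφ c hc) hc) ?_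
        calc φ c = f (cminus f c) (φ c) := (idem_mul_left hf hmI hmm (hφ c hc) h).symm
          _ = f (φ c) (cminus f c) := hf.2.2.1 _ _
          _ ≤ f (φ c) c := tn_mono hf (hφ c hc) (hφ c hc) hmI hc le_rfl hmc
      rw [h3] at h2
      exact le_antisymm h2 (hL1 c hc 1 one_mem hc.2)
    · -- L3
      intro c hc hnid hcm
      obtain ⟨hmI, hmc, hmm⟩ := cminus_spec hf hc
      obtain ⟨hMI, hcM, hMM⟩ := cplus_spec hf hc
      have hmM : cminus f c ≤ cplus f c := le_trans hmc hcM
      have hsub : ∀ x ∈ Set.Icc (cminus f c) (cplus f c), x ∈ I01 :=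
        fun x hx => ⟨le_trans hmI.1 hx.1, le_trans hx.2 hMI.2⟩
      have hlow : ∀ x ∈ Set.Icc (cminus f c) (cplus f c), cminus f c ≤ φ x := by
        intro x hxI
        have hxmem := hsub x hxI
        have h1 := hineq (cminus f c) hmI x hxmem
        have h2 : cminus f c ≤ timp f x (cminus f c) :=
          le_timp hf hmI (tn_le_right hf hxmem hmI)
        have htm : timp f x (cminus f c) ∈ I01 := timp_mem hf hxmem hmI
        calc cminus f c = f (cminus f c) (cminus f c) := hmm.symm
          _ ≤ f (φ (cminus f c)) (timp f x (cminus f c)) :=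
            tn_mono hf hmI (hφ _ hmI) hmI htm hcm h2
          _ ≤ φ x := h1
      refine ⟨hlow, ?_, ?_⟩
      · intro x hxI
        exact ⟨le_min hmM (hlow x hxI), min_le_left _ _⟩
      · intro x hxI y hyI
        have hxmem := hsub x hxI
        have hymem := hsub y hyI
        have htm : timp f y x ∈ I01 := timp_mem hf hymem hxmem
        have hminx : min (cplus f c) (φ x) ∈ I01 :=
          ⟨le_min hMI.1 (hφ x hxmem).1, le_trans (min_le_left _ _) hMI.2⟩
        have hmint : min (cplus f c) (timp f y x) ∈ I01 :=
          ⟨le_min hMI.1 htm.1, le_trans (min_le_left _ _) hMI.2⟩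
        refine le_min ?_ ?_
        · calc f (min (cplus f c) (φ x)) (min (cplus f c) (timp f y x))
              ≤ f (cplus f c) (cplus f c) :=
                tn_mono hf hminx hMI hmint hMI (min_le_left _ _) (min_le_left _ _)
            _ = cplus f c := hMM
        · calc f (min (cplus f c) (φ x)) (min (cplus f c) (timp f y x))
              ≤ f (φ x) (timp f y x) :=
                tn_mono hf hminx (hφ x hxmem) hmint htm (min_le_right _ _) (min_le_right _ _)
            _ ≤ φ y := hineq x hxmem y hymem
    · -- L4
      intro c hc hcc h
      have h2 := hineq c hc 1 one_mem
      rw [timp_one_left hf hc] at h2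
      calc c = f c c := hcc.symm
        _ ≤ f (φ c) c := tn_mono hf hc (hφ c hc) hc hc h le_rfl
        _ ≤ φ 1 := h2
  · rintro ⟨hL1, hL2, hL3, hL4⟩
    refine ⟨hφ, ?_⟩
    -- Key lemma K : f (φ x) x ≤ φ 1
    have K : ∀ x ∈ I01, f (φ x) x ≤ φ 1 := by
      intro x hx
      obtain ⟨hmI, hmx, hmm⟩ := cminus_spec hf hx
      obtain ⟨hMI, hxM, hMM⟩ := cplus_spec hf hx
      rcases le_total (φ x) (cminus f x) with h | h
      · have heq : f (φ x) x = φ x := by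
          refine le_antisymm (tn_le_left hf (hφ x hx) hx) ?_
          calc φ x = f (cminus f x) (φ x) := (idem_mul_left hf hmI hmm (hφ x hx) h).symm
            _ = f (φ x) (cminus f x) := hf.2.2.1 _ _
            _ ≤ f (φ x) x := tn_mono hf (hφ x hx) (hφ x hx) hmI hx le_rfl hmx
        rw [heq, hL2 x hx h]
      · by_cases hidem : f x x = x
        · have hm : cminus f x = x := cminus_idem hf hx hidem
          have hxφ : x ≤ φ x := by rw [hm] at h; exact h
          have h4 := hL4 x hx hidem hxφ
          exact le_trans (tn_le_right hf (hφ x hx) hx) h4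
        · have hmlt : cminus f x < x := lt_of_le_of_ne hmx (fun he => hidem (by
            rw [← he]; exact hmm))
          have hxlt : x < cplus f x := lt_of_le_of_ne hxM (fun he => hidem (by
            rw [he]; exact hMM))
          have hcond : cminus f x ≤ φ (cminus f x) :=
            le_trans h (hL1 (cminus f x) hmI x hx hmx)
          obtain ⟨hlow, -, hσ⟩ := hL3 x hx hidem hcond
          have hxI : x ∈ Set.Icc (cminus f x) (cplus f x) := ⟨hmx, hxM⟩
          have hMI' : cplus f x ∈ Set.Icc (cminus f x) (cplus f x) := ⟨le_trans hmx hxM, le_rfl⟩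
          have key : f (min (cplus f x) (φ x)) (min (cplus f x) (timp f (cplus f x) x))
              ≤ min (cplus f x) (φ (cplus f x)) := hσ x hxI (cplus f x) hMI'
          have ht : timp f (cplus f x) x = x :=
            timp_eq_of_idem hf hx hMI hMI hMM hxlt le_rfl
          rw [ht, min_eq_right hxlt.le] at key
          -- key : f (min (cplus f x) (φ x)) x ≤ min (cplus f x) (φ (cplus f x))
          have hb : f (φ x) x ≤ min (cplus f x) (φ (cplus f x)) := by
            rcases le_total (φ x) (cplus f x) with hpM | hpM
            · rwa [min_eq_right hpM] at key
            · rw [min_eq_left hpM] at key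
              refine le_trans ?_ key
              calc f (φ x) x ≤ x := tn_le_right hf (hφ x hx) hx
                _ = f (cplus f x) x := by
                    rw [idem_mul_min hf hMI hMM hx, min_eq_right hxM]
          rcases le_total (φ (cplus f x)) (cplus f x) with hc | hc
          · have := hL2 (cplus f x) hMI (by rw [cminus_idem hf hMI hMM]; exact hc)
            exact le_trans (le_trans hb (min_le_right _ _)) this.le
          · have := hL4 (cplus f x) hMI hMM hc
            exact le_trans (le_trans hb (min_le_left _ _)) this
    intro x hx y hy
    rcases le_or_gt y x with hyx | hxy
    · rw [timp_eq_one hf hy hx hyx, hunit (φ x) (hφ x hx)]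
      exact hL1 y hy x hx hyx
    · obtain ⟨hmI, hmy, hmm⟩ := cminus_spec hf hy
      obtain ⟨hMI, hyM, hMM⟩ := cplus_spec hf hy
      rcases lt_or_ge x (cminus f y) with hxm | hmx
      · -- Case 1
        have ht : timp f y x = x := timp_eq_of_idem hf hx hy hmI hmm hxm hmy
        rw [ht]
        rcases le_total (φ y) (cminus f y) with h | h
        · rw [hL2 y hy h]; exact K x hx
        · exact le_trans (tn_le_right hf (hφ x hx) hx) (le_trans hxm.le h)
      · -- Case 2
        have hynid : f y y ≠ y := by
          intro hid
          have := cminus_idem hf hy hid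
          rw [this] at hmx
          exact absurd hxy (not_lt.2 hmx)
        rcases le_total (φ (cminus f y)) (cminus f y) with h | h
        · have h1 : φ (cminus f y) = φ 1 :=
            hL2 (cminus f y) hmI (by rw [cminus_idem hf hmI hmm]; exact h)
          have h2 : φ x ≤ φ y :=
            le_trans (hL1 (cminus f y) hmI x hx hmx)
              (h1 ▸ hL1 y hy 1 one_mem hy.2)
          exact le_trans (tn_le_left hf (hφ x hx) (timp_mem hf hy hx)) h2
        · obtain ⟨-, -, hσ⟩ := hL3 y hy hynid h
          have hxI : x ∈ Set.Icc (cminus f y) (cplus f y) := ⟨hmx, le_trans hxy.le hyM⟩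
          have hyI : y ∈ Set.Icc (cminus f y) (cplus f y) := ⟨hmy, hyM⟩
          have key : f (min (cplus f y) (φ x)) (min (cplus f y) (timp f y x))
              ≤ min (cplus f y) (φ y) := hσ x hxI y hyI
          have htM : timp f y x ≤ cplus f y := timp_le_of_idem hf hx hy hMI hMM hxy hyM
          rw [min_eq_right htM] at key
          rcases le_total (φ x) (cplus f y) with hpM | hpM
          · rw [min_eq_right hpM] at key
            exact le_trans key (min_le_right _ _)
          · rw [min_eq_left hpM] at key
            have htm : timp f y x ∈ I01 := timp_mem hf hy hx
            have h2 : f (cplus f y) (timp f y x) = timp f y x := by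
              rw [idem_mul_min hf hMI hMM htm, min_eq_right htM]
            rw [h2] at key
            exact le_trans (le_trans (tn_le_right hf (hφ x hx) htm) key) (min_le_right _ _)
end

section
/- Let & be the t-norm min on [0,1]. A fuzzy lower set φ of ([0,1],d_L) is a flat ideal if and only if φ(0) = 1. -/
open Set

/-- Gödel implication for the t-norm `min`. -/
noncomputable def godel (a b : ℝ) : ℝ := if a ≤ b then 1 else b

/-- Fuzzy lower set of `([0,1], d_L)` for the t-norm `min`. -/
def MinFuzzyLowerSet (φ : ℝ → ℝ) : Prop :=
  (∀ x ∈ Set.Icc (0:ℝ) 1, φ x ∈ Set.Icc (0:ℝ) 1) ∧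
  ∀ x ∈ Set.Icc (0:ℝ) 1, ∀ y ∈ Set.Icc (0:ℝ) 1, min (φ x) (godel y x) ≤ φ y

/-- Fuzzy upper set of `([0,1], d_L)` for the t-norm `min`. -/
def MinFuzzyUpperSet (ψ : ℝ → ℝ) : Prop :=
  (∀ x ∈ Set.Icc (0:ℝ) 1, ψ x ∈ Set.Icc (0:ℝ) 1) ∧
  ∀ x ∈ Set.Icc (0:ℝ) 1, ∀ y ∈ Set.Icc (0:ℝ) 1, min (godel x y) (ψ x) ≤ ψ y

/-- The tensor product `φ ⊗ ψ = sup_{x ∈ [0,1]} min (φ x) (ψ x)`. -/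
noncomputable def minTensor (φ ψ : ℝ → ℝ) : ℝ :=
  sSup ((fun x => min (φ x) (ψ x)) '' Set.Icc (0:ℝ) 1)

lemma upper_mono {ψ : ℝ → ℝ} (h : MinFuzzyUpperSet ψ) :
    ∀ x ∈ Set.Icc (0:ℝ) 1, ∀ y ∈ Set.Icc (0:ℝ) 1, x ≤ y → ψ x ≤ ψ y := by
  intro x hx y hy hxy
  have := h.2 x hx y hy
  rw [godel, if_pos hxy, min_eq_right (h.1 x hx).2] at this
  exact this

/-- for the t-norm `min`, a fuzzy lower set `φ` of `([0,1],d_L)` is a flat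
ideal (inhabited and flat) iff `φ 0 = 1`. -/
theorem min_flat_ideal_iff (φ : ℝ → ℝ) (hφ : MinFuzzyLowerSet φ) :
    ((1 : ℝ) ≤ sSup (φ '' Set.Icc (0:ℝ) 1) ∧
     ∀ ψ₁ ψ₂ : ℝ → ℝ, MinFuzzyUpperSet ψ₁ → MinFuzzyUpperSet ψ₂ →
       minTensor φ (fun x => min (ψ₁ x) (ψ₂ x)) = min (minTensor φ ψ₁) (minTensor φ ψ₂)) ↔
    φ 0 = 1 := by
  obtain ⟨hb, hlo⟩ := hφ
  have h0 : (0:ℝ) ∈ Set.Icc (0:ℝ) 1 := ⟨le_refl 0, by norm_num⟩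
  have hanti : ∀ x ∈ Set.Icc (0:ℝ) 1, ∀ y ∈ Set.Icc (0:ℝ) 1, y ≤ x → φ x ≤ φ y := by
    intro x hx y hy hyx
    have := hlo x hx y hy
    rw [godel, if_pos hyx, min_eq_left (hb x hx).2] at this
    exact this
  have hbdd : ∀ f : ℝ → ℝ, BddAbove ((fun x => min (φ x) (f x)) '' Set.Icc (0:ℝ) 1) := by
    intro f
    refine ⟨1, ?_⟩
    rintro a ⟨x, hx, rfl⟩
    exact le_trans (min_le_left _ _) (hb x hx).2
  have hne : ∀ f : ℝ → ℝ, ((fun x => min (φ x) (f x)) '' Set.Icc (0:ℝ) 1).Nonempty :=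
    fun f => ⟨_, ⟨0, h0, rfl⟩⟩
  constructor
  · rintro ⟨hinh, -⟩
    have hle : sSup (φ '' Set.Icc (0:ℝ) 1) ≤ φ 0 := by
      refine csSup_le ⟨_, ⟨0, h0, rfl⟩⟩ ?_
      rintro a ⟨x, hx, rfl⟩
      exact hanti x hx 0 h0 hx.1
    exact le_antisymm (hb 0 h0).2 (le_trans hinh hle)
  · intro hφ0
    constructor
    · have : φ 0 ≤ sSup (φ '' Set.Icc (0:ℝ) 1) := by
        refine le_csSup ⟨1, ?_⟩ ⟨0, h0, rfl⟩
        rintro a ⟨x, hx, rfl⟩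
        exact (hb x hx).2
      linarith
    · intro ψ₁ ψ₂ h1 h2
      unfold minTensor
      apply le_antisymm
      · apply le_min
        · apply csSup_le (hne _)
          rintro a ⟨x, hx, rfl⟩
          exact le_trans (min_le_min le_rfl (min_le_left _ _))
            (le_csSup (hbdd ψ₁) ⟨x, hx, rfl⟩)
        · apply csSup_le (hne _)
          rintro a ⟨x, hx, rfl⟩
          exact le_trans (min_le_min le_rfl (min_le_right _ _))
            (le_csSup (hbdd ψ₂) ⟨x, hx, rfl⟩)
      · apply le_of_forall_pos_le_add
        intro ε hε
        set m := min (sSup ((fun x => min (φ x) (ψ₁ x)) '' Set.Icc (0:ℝ) 1))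
          (sSup ((fun x => min (φ x) (ψ₂ x)) '' Set.Icc (0:ℝ) 1)) with hm
        have hA : m - ε < sSup ((fun x => min (φ x) (ψ₁ x)) '' Set.Icc (0:ℝ) 1) := by
          have := min_le_left (sSup ((fun x => min (φ x) (ψ₁ x)) '' Set.Icc (0:ℝ) 1))
            (sSup ((fun x => min (φ x) (ψ₂ x)) '' Set.Icc (0:ℝ) 1))
          rw [← hm] at this; linarith
        have hB : m - ε < sSup ((fun x => min (φ x) (ψ₂ x)) '' Set.Icc (0:ℝ) 1) := by
          have := min_le_right (sSup ((fun x => min (φ x) (ψ₁ x)) '' Set.Icc (0:ℝ) 1))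
            (sSup ((fun x => min (φ x) (ψ₂ x)) '' Set.Icc (0:ℝ) 1))
          rw [← hm] at this; linarith
        obtain ⟨a, ⟨x₁, hx₁, rfl⟩, ha⟩ := exists_lt_of_lt_csSup (hne ψ₁) hA
        obtain ⟨b, ⟨x₂, hx₂, rfl⟩, hbx⟩ := exists_lt_of_lt_csSup (hne ψ₂) hB
        have hφ1 : m - ε < φ x₁ := lt_of_lt_of_le ha (min_le_left _ _)
        have hψ1 : m - ε < ψ₁ x₁ := lt_of_lt_of_le ha (min_le_right _ _)
        have hφ2 : m - ε < φ x₂ := lt_of_lt_of_le hbx (min_le_left _ _)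
        have hψ2 : m - ε < ψ₂ x₂ := lt_of_lt_of_le hbx (min_le_right _ _)
        rcases le_total x₁ x₂ with hxx | hxx
        · have key : m - ε < min (φ x₂) (min (ψ₁ x₂) (ψ₂ x₂)) := by
            have := upper_mono h1 x₁ hx₁ x₂ hx₂ hxx
            simp only [lt_min_iff]
            exact ⟨hφ2, lt_of_lt_of_le hψ1 this, hψ2⟩
          have := le_csSup (hbdd (fun x => min (ψ₁ x) (ψ₂ x))) ⟨x₂, hx₂, rfl⟩
          simp only at this
          linarith
        · have key : m - ε < min (φ x₁) (min (ψ₁ x₁) (ψ₂ x₁)) := by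
            have := upper_mono h2 x₂ hx₂ x₁ hx₁ hxx
            simp only [lt_min_iff]
            exact ⟨hφ1, hψ1, lt_of_lt_of_le hψ2 this⟩
          have := le_csSup (hbdd (fun x => min (ψ₁ x) (ψ₂ x))) ⟨x₁, hx₁, rfl⟩
          simp only at this
          linarith
end

section
/- Let K ⊆ [0,1], let φ : K → [0,1] be decreasing and ψ₁, ψ₂ : K → [0,1] be increasing. Then sup_{x∈K} min(φ(x), ψ₁(x), ψ₂(x)) = min( sup_{x∈K} min(φ(x),ψ₁(x)), sup_{x∈K} min(φ(x),ψ₂(x)) ). -/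
/-- for `K ⊆ [0,1]`, `φ` decreasing on `K` and `ψ₁, ψ₂` increasing on `K`
(all valued in `[0,1]`),
`sup_{x∈K} min (φ x) (min (ψ₁ x) (ψ₂ x))
  = min (sup_{x∈K} min (φ x) (ψ₁ x)) (sup_{x∈K} min (φ x) (ψ₂ x))`. -/
theorem sup_min_decreasing_increasing (K : Set ℝ) (hK : K ⊆ Set.Icc (0:ℝ) 1)
    (φ ψ₁ ψ₂ : ℝ → ℝ)
    (hφm : ∀ x ∈ K, φ x ∈ Set.Icc (0:ℝ) 1)
    (hψ₁m : ∀ x ∈ K, ψ₁ x ∈ Set.Icc (0:ℝ) 1)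
    (hψ₂m : ∀ x ∈ K, ψ₂ x ∈ Set.Icc (0:ℝ) 1)
    (hφ : ∀ x ∈ K, ∀ y ∈ K, x ≤ y → φ y ≤ φ x)
    (hψ₁ : ∀ x ∈ K, ∀ y ∈ K, x ≤ y → ψ₁ x ≤ ψ₁ y)
    (hψ₂ : ∀ x ∈ K, ∀ y ∈ K, x ≤ y → ψ₂ x ≤ ψ₂ y) :
    sSup ((fun x => min (φ x) (min (ψ₁ x) (ψ₂ x))) '' K) =
      min (sSup ((fun x => min (φ x) (ψ₁ x)) '' K))
          (sSup ((fun x => min (φ x) (ψ₂ x)) '' K)) := by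
  rcases K.eq_empty_or_nonempty with hKe | hKne
  · simp [hKe, Real.sSup_empty]
  set f : ℝ → ℝ := fun x => min (φ x) (min (ψ₁ x) (ψ₂ x)) with hf
  set g₁ : ℝ → ℝ := fun x => min (φ x) (ψ₁ x) with hg₁
  set g₂ : ℝ → ℝ := fun x => min (φ x) (ψ₂ x) with hg₂
  have hbdf : BddAbove (f '' K) := by
    refine ⟨1, ?_⟩
    rintro y ⟨x, hx, rfl⟩
    exact le_trans (min_le_left _ _) (hφm x hx).2
  have hbdg₁ : BddAbove (g₁ '' K) := by
    refine ⟨1, ?_⟩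
    rintro y ⟨x, hx, rfl⟩
    exact le_trans (min_le_left _ _) (hφm x hx).2
  have hbdg₂ : BddAbove (g₂ '' K) := by
    refine ⟨1, ?_⟩
    rintro y ⟨x, hx, rfl⟩
    exact le_trans (min_le_left _ _) (hφm x hx).2
  have hnef : (f '' K).Nonempty := hKne.image f
  have hneg₁ : (g₁ '' K).Nonempty := hKne.image g₁
  have hneg₂ : (g₂ '' K).Nonempty := hKne.image g₂
  apply le_antisymm
  · apply le_min
    · apply csSup_le hnef
      rintro y ⟨x, hx, rfl⟩
      refine le_trans ?_ (le_csSup hbdg₁ ⟨x, hx, rfl⟩)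
      exact min_le_min le_rfl (min_le_left _ _)
    · apply csSup_le hnef
      rintro y ⟨x, hx, rfl⟩
      refine le_trans ?_ (le_csSup hbdg₂ ⟨x, hx, rfl⟩)
      exact min_le_min le_rfl (min_le_right _ _)
  · apply le_of_forall_sub_le
    intro ε hε
    set m := min (sSup (g₁ '' K)) (sSup (g₂ '' K)) with hm
    have h1 : m - ε < sSup (g₁ '' K) := lt_of_lt_of_le (by linarith [min_le_left (sSup (g₁ '' K)) (sSup (g₂ '' K))]) le_rfl
    have h2 : m - ε < sSup (g₂ '' K) := lt_of_lt_of_le (by linarith [min_le_right (sSup (g₁ '' K)) (sSup (g₂ '' K))]) le_rfl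
    obtain ⟨y₁, ⟨x₁, hx₁, rfl⟩, hy₁⟩ := exists_lt_of_lt_csSup hneg₁ h1
    obtain ⟨y₂, ⟨x₂, hx₂, rfl⟩, hy₂⟩ := exists_lt_of_lt_csSup hneg₂ h2
    rw [lt_min_iff] at hy₁ hy₂
    rcases le_total x₁ x₂ with hle | hle
    · -- use x₂ : φ x₂, ψ₂ x₂ > m-ε; ψ₁ x₂ ≥ ψ₁ x₁ > m-ε
      have hfx : m - ε ≤ f x₂ := by
        have := hψ₁ x₁ hx₁ x₂ hx₂ hle
        simp only [hf, le_min_iff]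
        exact ⟨hy₂.1.le, le_trans hy₁.2.le this, hy₂.2.le⟩
      exact le_trans hfx (le_csSup hbdf ⟨x₂, hx₂, rfl⟩)
    · have hfx : m - ε ≤ f x₁ := by
        have := hψ₂ x₂ hx₂ x₁ hx₁ hle
        simp only [hf, le_min_iff]
        exact ⟨hy₁.1.le, hy₁.2.le, le_trans hy₂.2.le this⟩
      exact le_trans hfx (le_csSup hbdf ⟨x₁, hx₁, rfl⟩)
end
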